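/- arXiv:2306.04488 — 7 statements merged into one kernel-verified Lean document; each statement's English description precedes it below -/
import Mathlib

section
/- Let θ₁, θ₂ ∈ ℝ^d with θ₁ ≠ θ₂, c₁, c₂ ∈ ℝ, and η₁ʲ, η₂ʲ > 0 for j = 1,…,d, and define Rᵢ(θ) = cᵢ − ∑ⱼ ηᵢʲ (θʲ − θᵢʲ)² for i ∈ {1,2}. Fix μ̂ ∈ [0,1], R_μ̂ = (1−μ̂)·R₁ + μ̂·R₂, λ̂ʲ = μ̂η₂ʲ/((1−μ̂)η₁ʲ + μ̂η₂ʲ), and pⱼ = ((1−μ̂)η₁ʲ + μ̂η₂ʲ)(θ₁ʲ − θ₂ʲ)². Then λ̄ = (∑ⱼ pⱼ λ̂ʲ)/(∑ⱼ pⱼ) is well defined, lies in [0,1], and maximizes the function λ ↦ R_μ̂((1−λ)·θ₁ + λ·θ₂) over all λ ∈ ℝ; in particular λ̄ achieves sup_{λ ∈ [0,1]} R_μ̂((1−λ)·θ₁ + λ·θ₂). -/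
/-- The optimal rewarded-soups interpolation coefficient `λ̄ = (∑ j, pⱼ λ̂ʲ)/(∑ j, pⱼ)` is
well defined (the denominator is positive since `θ₁ ≠ θ₂`), lies in `[0,1]`, maximizes
`λ ↦ R_μ̂((1-λ)θ₁ + λθ₂)` over all `λ ∈ ℝ`, and in particular achieves the supremum of
this function over `λ ∈ [0,1]`. -/
theorem stmt_6 {d : ℕ} (θ1 θ2 : Fin d → ℝ) (hne : θ1 ≠ θ2) (c1 c2 : ℝ) (η1 η2 : Fin d → ℝ)
    (hη1 : ∀ j, 0 < η1 j) (hη2 : ∀ j, 0 < η2 j)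
    (R1 R2 : (Fin d → ℝ) → ℝ)
    (hR1 : ∀ θ, R1 θ = c1 - ∑ j, η1 j * (θ j - θ1 j) ^ 2)
    (hR2 : ∀ θ, R2 θ = c2 - ∑ j, η2 j * (θ j - θ2 j) ^ 2)
    (μ : ℝ) (hμ : μ ∈ Set.Icc (0 : ℝ) 1)
    (Rμ : (Fin d → ℝ) → ℝ) (hRμ : ∀ θ, Rμ θ = (1 - μ) * R1 θ + μ * R2 θ)
    (lamh : Fin d → ℝ)
    (hlamh : ∀ j, lamh j = μ * η2 j / ((1 - μ) * η1 j + μ * η2 j))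
    (p : Fin d → ℝ)
    (hp : ∀ j, p j = ((1 - μ) * η1 j + μ * η2 j) * (θ1 j - θ2 j) ^ 2)
    (lbar : ℝ) (hlbar : lbar = (∑ j, p j * lamh j) / ∑ j, p j) :
    (0 < ∑ j, p j) ∧ lbar ∈ Set.Icc (0 : ℝ) 1 ∧
      (∀ lam : ℝ, Rμ (fun j => (1 - lam) * θ1 j + lam * θ2 j)
        ≤ Rμ (fun j => (1 - lbar) * θ1 j + lbar * θ2 j)) ∧
      Rμ (fun j => (1 - lbar) * θ1 j + lbar * θ2 j)
        = sSup ((fun lam => Rμ (fun j => (1 - lam) * θ1 j + lam * θ2 j)) '' Set.Icc (0 : ℝ) 1) := by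
  obtain ⟨hμ0, hμ1⟩ := hμ
  -- positivity of the denominators
  have hab : ∀ j, 0 < (1 - μ) * η1 j + μ * η2 j := by
    intro j
    rcases eq_or_lt_of_le hμ0 with h | h
    · have : (1 - μ) * η1 j = η1 j := by rw [← h]; ring
      nlinarith [hη1 j, hη2 j]
    · nlinarith [hη1 j, hη2 j]
  have hpnn : ∀ j, 0 ≤ p j := fun j => by
    rw [hp]; exact mul_nonneg (hab j).le (sq_nonneg _)
  -- positivity of ∑ p
  have hP : 0 < ∑ j, p j := by
    obtain ⟨j, hj⟩ : ∃ j, θ1 j ≠ θ2 j := by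
      by_contra h
      push_neg at h
      exact hne (funext h)
    refine Finset.sum_pos' (fun i _ => hpnn i) ⟨j, Finset.mem_univ j, ?_⟩
    rw [hp]
    have hj' : θ1 j - θ2 j ≠ 0 := sub_ne_zero.mpr hj
    exact mul_pos (hab j) (by positivity)
  have hPne : (∑ j, p j) ≠ 0 := ne_of_gt hP
  -- p j * lamh j = μ * η2 j * (θ1 j - θ2 j)^2
  have hplam : ∀ j, p j * lamh j = μ * η2 j * (θ1 j - θ2 j) ^ 2 := by
    intro j
    have hc : ((1 - μ) * η1 j + μ * η2 j) ≠ 0 := (hab j).ne'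
    rw [hp, hlamh]
    field_simp
  -- lamh ∈ [0,1]
  have hlam0 : ∀ j, 0 ≤ lamh j := fun j => by
    rw [hlamh]
    exact div_nonneg (by nlinarith [hη2 j]) (le_of_lt (hab j))
  have hlam1 : ∀ j, lamh j ≤ 1 := fun j => by
    rw [hlamh]
    rw [div_le_one (hab j)]
    nlinarith [hη1 j]
  -- lbar ∈ [0,1]
  have hQ0 : 0 ≤ ∑ j, p j * lamh j :=
    Finset.sum_nonneg fun j _ => mul_nonneg (hpnn j) (hlam0 j)
  have hQ1 : (∑ j, p j * lamh j) ≤ ∑ j, p j :=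
    Finset.sum_le_sum fun j _ => by
      nlinarith [hpnn j, hlam1 j]
  have hlbar01 : lbar ∈ Set.Icc (0:ℝ) 1 := by
    rw [hlbar]
    constructor
    · exact div_nonneg hQ0 (le_of_lt hP)
    · rw [div_le_one hP]; exact hQ1
  -- Q = lbar * P
  have hQ : (∑ j, p j * lamh j) = lbar * ∑ j, p j := by
    rw [hlbar]; field_simp
  -- formula for the interpolated reward
  have hf : ∀ lam : ℝ, Rμ (fun j => (1 - lam) * θ1 j + lam * θ2 j)
      = ((1 - μ) * c1 + μ * c2)
        - ∑ j, ((1 - μ) * η1 j * lam ^ 2 + μ * η2 j * (1 - lam) ^ 2) * (θ1 j - θ2 j) ^ 2 := by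
    intro lam
    rw [hRμ, hR1, hR2]
    have e1 : ∑ j, η1 j * (((1 - lam) * θ1 j + lam * θ2 j) - θ1 j) ^ 2
        = ∑ j, η1 j * lam ^ 2 * (θ1 j - θ2 j) ^ 2 :=
      Finset.sum_congr rfl fun j _ => by ring
    have e2 : ∑ j, η2 j * (((1 - lam) * θ1 j + lam * θ2 j) - θ2 j) ^ 2
        = ∑ j, η2 j * (1 - lam) ^ 2 * (θ1 j - θ2 j) ^ 2 :=
      Finset.sum_congr rfl fun j _ => by ring
    have e3 : ∑ j, ((1 - μ) * η1 j * lam ^ 2 + μ * η2 j * (1 - lam) ^ 2) * (θ1 j - θ2 j) ^ 2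
        = (1 - μ) * ∑ j, η1 j * lam ^ 2 * (θ1 j - θ2 j) ^ 2
          + μ * ∑ j, η2 j * (1 - lam) ^ 2 * (θ1 j - θ2 j) ^ 2 := by
      rw [Finset.mul_sum, Finset.mul_sum, ← Finset.sum_add_distrib]
      exact Finset.sum_congr rfl fun j _ => by ring
    rw [e1, e2, e3]
    ring
  -- the key quadratic identity
  have hkey : ∀ lam : ℝ,
      Rμ (fun j => (1 - lbar) * θ1 j + lbar * θ2 j)
        - Rμ (fun j => (1 - lam) * θ1 j + lam * θ2 j)
      = (∑ j, p j) * (lam - lbar) ^ 2 := by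
    intro lam
    rw [hf lam, hf lbar]
    have e : ∑ j, ((1 - μ) * η1 j * lam ^ 2 + μ * η2 j * (1 - lam) ^ 2) * (θ1 j - θ2 j) ^ 2
        - ∑ j, ((1 - μ) * η1 j * lbar ^ 2 + μ * η2 j * (1 - lbar) ^ 2) * (θ1 j - θ2 j) ^ 2
        = (∑ j, p j) * (lam ^ 2 - lbar ^ 2) - 2 * (∑ j, p j * lamh j) * (lam - lbar) := by
      have e2 : (∑ j, p j) * (lam ^ 2 - lbar ^ 2) - 2 * (∑ j, p j * lamh j) * (lam - lbar)
          = ∑ j, (p j * (lam ^ 2 - lbar ^ 2) - 2 * (p j * lamh j) * (lam - lbar)) := by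
        rw [Finset.sum_sub_distrib, Finset.sum_mul]
        congr 1
        rw [mul_assoc, Finset.sum_mul, Finset.mul_sum]
        exact Finset.sum_congr rfl fun j _ => by ring
      rw [← Finset.sum_sub_distrib, e2]
      refine Finset.sum_congr rfl fun j _ => ?_
      rw [hplam, hp]
      ring
    rw [hQ] at e
    linear_combination e
  have hmax : ∀ lam : ℝ, Rμ (fun j => (1 - lam) * θ1 j + lam * θ2 j)
      ≤ Rμ (fun j => (1 - lbar) * θ1 j + lbar * θ2 j) := by
    intro lam
    have h := hkey lam
    nlinarith [mul_nonneg hP.le (sq_nonneg (lam - lbar))]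
  refine ⟨hP, hlbar01, hmax, ?_⟩
  have hgreat : IsGreatest
      ((fun lam => Rμ (fun j => (1 - lam) * θ1 j + lam * θ2 j)) '' Set.Icc (0:ℝ) 1)
      (Rμ (fun j => (1 - lbar) * θ1 j + lbar * θ2 j)) := by
    constructor
    · exact ⟨lbar, hlbar01, rfl⟩
    · rintro y ⟨lam, _, rfl⟩
      exact hmax lam
  exact hgreat.csSup_eq.symm
end

section
/- Let θ₁, θ₂ ∈ ℝ^d with θ₁ ≠ θ₂, c₁, c₂ ∈ ℝ, and η₁ʲ, η₂ʲ > 0 for j = 1,…,d, and define Rᵢ(θ) = cᵢ − ∑ⱼ ηᵢʲ (θʲ − θᵢʲ)² for i ∈ {1,2}. Fix μ̂ ∈ [0,1], R_μ̂ = (1−μ̂)·R₁ + μ̂·R₂, λ̂ʲ = μ̂η₂ʲ/((1−μ̂)η₁ʲ + μ̂η₂ʲ), pⱼ = ((1−μ̂)η₁ʲ + μ̂η₂ʲ)(θ₁ʲ − θ₂ʲ)², λ̄ = (∑ⱼ pⱼλ̂ʲ)/(∑ⱼ pⱼ), and let θ̂ be the global maximizer of R_μ̂. Then the rewarded-soups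 suboptimality gap satisfies the exact identity ΔR_μ̂ := R_μ̂(θ̂) − sup_{λ ∈ [0,1]} R_μ̂((1−λ)·θ₁ + λ·θ₂) = ∑_{j=1}^{d} pⱼ (λ̄ − λ̂ʲ)². -/
private lemma quad_key (e1 e2 a b x lam : ℝ) (hlam : (e1 + e2) * lam = e2) :
    e1 * (x - a) ^ 2 + e2 * (x - b) ^ 2
      = (e1 * (((1 - lam) * a + lam * b) - a) ^ 2 + e2 * (((1 - lam) * a + lam * b) - b) ^ 2)
        + (e1 + e2) * (x - ((1 - lam) * a + lam * b)) ^ 2 := by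
  linear_combination ((x - a) ^ 2 - (x - b) ^ 2 - (2 * lam - 1) * (b - a) ^ 2) * hlam

/-- Exact identity for the rewarded-soups suboptimality gap:
`R_μ̂(θ̂) - sup_{λ ∈ [0,1]} R_μ̂((1-λ)θ₁ + λθ₂) = ∑ j, pⱼ (λ̄ - λ̂ʲ)²`. -/
theorem stmt_7 {d : ℕ} (θ1 θ2 : Fin d → ℝ) (hne : θ1 ≠ θ2) (c1 c2 : ℝ) (η1 η2 : Fin d → ℝ)
    (hη1 : ∀ j, 0 < η1 j) (hη2 : ∀ j, 0 < η2 j)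
    (R1 R2 : (Fin d → ℝ) → ℝ)
    (hR1 : ∀ θ, R1 θ = c1 - ∑ j, η1 j * (θ j - θ1 j) ^ 2)
    (hR2 : ∀ θ, R2 θ = c2 - ∑ j, η2 j * (θ j - θ2 j) ^ 2)
    (μ : ℝ) (hμ : μ ∈ Set.Icc (0 : ℝ) 1)
    (Rμ : (Fin d → ℝ) → ℝ) (hRμ : ∀ θ, Rμ θ = (1 - μ) * R1 θ + μ * R2 θ)
    (lamh : Fin d → ℝ)
    (hlamh : ∀ j, lamh j = μ * η2 j / ((1 - μ) * η1 j + μ * η2 j))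
    (p : Fin d → ℝ)
    (hp : ∀ j, p j = ((1 - μ) * η1 j + μ * η2 j) * (θ1 j - θ2 j) ^ 2)
    (lbar : ℝ) (hlbar : lbar = (∑ j, p j * lamh j) / ∑ j, p j)
    (θhat : Fin d → ℝ) (hθhat : ∀ θ, Rμ θ ≤ Rμ θhat) :
    Rμ θhat - sSup ((fun lam => Rμ (fun j => (1 - lam) * θ1 j + lam * θ2 j)) '' Set.Icc (0 : ℝ) 1)
      = ∑ j, p j * (lbar - lamh j) ^ 2 := by
  obtain ⟨hμ0, hμ1⟩ := hμ
  -- positivity of combined curvature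
  have hηpos : ∀ j, 0 < (1 - μ) * η1 j + μ * η2 j := by
    intro j
    rcases eq_or_lt_of_le hμ0 with h | h
    · rw [← h]; simpa using hη1 j
    · have h1 : 0 < μ * η2 j := mul_pos h (hη2 j)
      have h2 : 0 ≤ (1 - μ) * η1 j := mul_nonneg (by linarith) (hη1 j).le
      linarith
  have hprel : ∀ j, ((1 - μ) * η1 j + μ * η2 j) * lamh j = μ * η2 j := by
    intro j; rw [hlamh j]; field_simp
    exact mul_div_cancel_right₀ _ (hηpos j).ne'
  have hlamh0 : ∀ j, 0 ≤ lamh j := by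
    intro j; rw [hlamh j]
    exact div_nonneg (mul_nonneg hμ0 (hη2 j).le) (hηpos j).le
  have hlamh1 : ∀ j, lamh j ≤ 1 := by
    intro j; rw [hlamh j, div_le_one (hηpos j)]
    nlinarith [mul_nonneg (by linarith : (0:ℝ) ≤ 1 - μ) (hη1 j).le]
  set m : Fin d → ℝ := fun j => (1 - lamh j) * θ1 j + lamh j * θ2 j with hm
  have hRμ' : ∀ θ, Rμ θ = ((1 - μ) * c1 + μ * c2)
      - ∑ j, ((1 - μ) * (η1 j * (θ j - θ1 j) ^ 2) + μ * (η2 j * (θ j - θ2 j) ^ 2)) := by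
    intro θ
    rw [hRμ θ, hR1, hR2, Finset.sum_add_distrib, ← Finset.mul_sum, ← Finset.mul_sum]
    ring
  have hdecomp : ∀ θ, Rμ θ = Rμ m - ∑ j, ((1 - μ) * η1 j + μ * η2 j) * (θ j - m j) ^ 2 := by
    intro θ
    rw [hRμ' θ, hRμ' m]
    have key : ∀ j ∈ Finset.univ,
        (1 - μ) * (η1 j * (θ j - θ1 j) ^ 2) + μ * (η2 j * (θ j - θ2 j) ^ 2)
          = ((1 - μ) * (η1 j * (m j - θ1 j) ^ 2) + μ * (η2 j * (m j - θ2 j) ^ 2))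
            + ((1 - μ) * η1 j + μ * η2 j) * (θ j - m j) ^ 2 := by
      intro j _
      have h := quad_key ((1 - μ) * η1 j) (μ * η2 j) (θ1 j) (θ2 j) (θ j) (lamh j) (hprel j)
      simp only [hm]
      linarith [h]
    rw [Finset.sum_congr rfl key, Finset.sum_add_distrib]
    ring
  have hmax : ∀ θ, Rμ θ ≤ Rμ m := by
    intro θ
    rw [hdecomp θ]
    have : 0 ≤ ∑ j, ((1 - μ) * η1 j + μ * η2 j) * (θ j - m j) ^ 2 :=
      Finset.sum_nonneg fun j _ => mul_nonneg (hηpos j).le (sq_nonneg _)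
    linarith
  have hC : Rμ θhat = Rμ m := le_antisymm (hmax θhat) (hθhat m)
  have hseg : ∀ lam : ℝ, Rμ (fun j => (1 - lam) * θ1 j + lam * θ2 j)
      = Rμ m - ∑ j, p j * (lam - lamh j) ^ 2 := by
    intro lam
    rw [hdecomp]
    congr 1
    refine Finset.sum_congr rfl fun j _ => ?_
    rw [hp j]
    simp only [hm]
    ring
  -- nonnegativity / positivity of p
  have hp0 : ∀ j, 0 ≤ p j := fun j => by
    rw [hp j]; exact mul_nonneg (hηpos j).le (sq_nonneg _)
  have hPpos : 0 < ∑ j, p j := by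
    obtain ⟨j0, hj0⟩ := Function.ne_iff.mp hne
    refine Finset.sum_pos' (fun j _ => hp0 j) ⟨j0, Finset.mem_univ j0, ?_⟩
    rw [hp j0]
    exact mul_pos (hηpos j0) (by
      have h := sub_ne_zero.mpr hj0
      positivity)
  have hlbar_eq : (∑ j, p j) * lbar = ∑ j, p j * lamh j := by
    rw [hlbar]; field_simp
  have hmin : ∀ lam : ℝ, ∑ j, p j * (lbar - lamh j) ^ 2 ≤ ∑ j, p j * (lam - lamh j) ^ 2 := by
    intro lam
    have h1 : ∑ j, p j * (lam - lamh j) ^ 2 - ∑ j, p j * (lbar - lamh j) ^ 2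
        = (∑ j, p j) * (lam - lbar) ^ 2 := by
      rw [← Finset.sum_sub_distrib]
      have key : ∀ j ∈ Finset.univ, p j * (lam - lamh j) ^ 2 - p j * (lbar - lamh j) ^ 2
          = (lam - lbar) * ((lam + lbar) * p j - 2 * (p j * lamh j)) := fun j _ => by ring
      rw [Finset.sum_congr rfl key, ← Finset.mul_sum, Finset.sum_sub_distrib,
        ← Finset.mul_sum, ← Finset.mul_sum]
      linear_combination (2 * lam - 2 * lbar) * hlbar_eq
    nlinarith [mul_nonneg hPpos.le (sq_nonneg (lam - lbar))]
  have hlbar01 : lbar ∈ Set.Icc (0:ℝ) 1 := by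
    constructor
    · rw [hlbar]
      exact div_nonneg (Finset.sum_nonneg fun j _ => mul_nonneg (hp0 j) (hlamh0 j)) hPpos.le
    · rw [hlbar, div_le_one hPpos]
      refine Finset.sum_le_sum fun j _ => ?_
      nlinarith [hp0 j, hlamh1 j]
  have hg : IsGreatest ((fun lam => Rμ (fun j => (1 - lam) * θ1 j + lam * θ2 j)) '' Set.Icc (0:ℝ) 1)
      (Rμ m - ∑ j, p j * (lbar - lamh j) ^ 2) := by
    constructor
    · exact ⟨lbar, hlbar01, hseg lbar⟩
    · rintro y ⟨lam, _, rfl⟩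
      dsimp only
      rw [hseg lam]
      have := hmin lam
      linarith
  rw [hg.csSup_eq, hC]
  ring
end

section
/- Let θ₁, θ₂ ∈ ℝ^d with θ₁ ≠ θ₂, c₁, c₂ ∈ ℝ, and η₁ʲ, η₂ʲ > 0 for j = 1,…,d, and define Rᵢ(θ) = cᵢ − ∑ⱼ ηᵢʲ (θʲ − θᵢʲ)² for i ∈ {1,2}. Fix μ̂ ∈ [0,1], set λ̂ʲ = μ̂η₂ʲ/((1−μ̂)η₁ʲ + μ̂η₂ʲ), pⱼ = ((1−μ̂)η₁ʲ + μ̂η₂ʲ)(θ₁ʲ − θ₂ʲ)², λ̄ = (∑ⱼ pⱼλ̂ʲ)/(∑ⱼ pⱼ), Δ₁ = R₁(θ₁) − R₁(θ₂) and Δ₂ = R₂(θ₂) − R₂(θ₁). Then the rewarded-soups gap ΔR_μ̂ = R_μ̂(θ̂) − sup_{λ ∈ [0,1]} R_μ̂((1−λ)·θ₁ + λ·θ₂) satisfies ΔR_μ̂ ≤ (max_{1≤j≤d} λ̂ʲ − λ̄)·(λ̄ − min_{1≤j≤d} λ̂ʲ)·((1−μ̂)Δ₁ + μ̂Δ₂).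 -/
/-- Bhatia–Davis bound on the rewarded-soups gap:
`ΔR_μ̂ ≤ (max_j λ̂ʲ - λ̄)(λ̄ - min_j λ̂ʲ)((1-μ̂)Δ₁ + μ̂Δ₂)`. -/
theorem stmt_10 {d : ℕ} (θ1 θ2 : Fin d → ℝ) (hne : θ1 ≠ θ2) (c1 c2 : ℝ) (η1 η2 : Fin d → ℝ)
    (hη1 : ∀ j, 0 < η1 j) (hη2 : ∀ j, 0 < η2 j)
    (R1 R2 : (Fin d → ℝ) → ℝ)
    (hR1 : ∀ θ, R1 θ = c1 - ∑ j, η1 j * (θ j - θ1 j) ^ 2)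
    (hR2 : ∀ θ, R2 θ = c2 - ∑ j, η2 j * (θ j - θ2 j) ^ 2)
    (μ : ℝ) (hμ : μ ∈ Set.Icc (0 : ℝ) 1)
    (Rμ : (Fin d → ℝ) → ℝ) (hRμ : ∀ θ, Rμ θ = (1 - μ) * R1 θ + μ * R2 θ)
    (lamh : Fin d → ℝ)
    (hlamh : ∀ j, lamh j = μ * η2 j / ((1 - μ) * η1 j + μ * η2 j))
    (p : Fin d → ℝ)
    (hp : ∀ j, p j = ((1 - μ) * η1 j + μ * η2 j) * (θ1 j - θ2 j) ^ 2)
    (lbar : ℝ) (hlbar : lbar = (∑ j, p j * lamh j) / ∑ j, p j)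
    (Δ1 Δ2 : ℝ) (hΔ1 : Δ1 = R1 θ1 - R1 θ2) (hΔ2 : Δ2 = R2 θ2 - R2 θ1)
    (θhat : Fin d → ℝ) (hθhat : ∀ θ, Rμ θ ≤ Rμ θhat) :
    Rμ θhat - sSup ((fun lam => Rμ (fun j => (1 - lam) * θ1 j + lam * θ2 j)) '' Set.Icc (0 : ℝ) 1)
      ≤ ((⨆ j, lamh j) - lbar) * (lbar - ⨅ j, lamh j) * ((1 - μ) * Δ1 + μ * Δ2) := by
  have hd : Nonempty (Fin d) := by
    rcases isEmpty_or_nonempty (Fin d) with h | h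
    · exact absurd (funext fun j => h.elim j) hne
    · exact h
  have hμ0 : 0 ≤ μ := hμ.1
  have hμ1 : μ ≤ 1 := hμ.2
  have hs_pos : ∀ j, 0 < (1 - μ) * η1 j + μ * η2 j := by
    intro j
    rcases eq_or_lt_of_le hμ1 with h | h
    · rw [h]; simpa using hη2 j
    · nlinarith [mul_pos (by linarith : (0:ℝ) < 1 - μ) (hη1 j), mul_nonneg hμ0 (hη2 j).le]
  have hl0 : ∀ j, 0 ≤ lamh j := by
    intro j; rw [hlamh j]
    exact div_nonneg (mul_nonneg hμ0 (hη2 j).le) (hs_pos j).le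
  have hl1 : ∀ j, lamh j ≤ 1 := by
    intro j; rw [hlamh j, div_le_one (hs_pos j)]
    nlinarith [hη1 j]
  have hp_nn : ∀ j, 0 ≤ p j := by
    intro j; rw [hp j]
    exact mul_nonneg (hs_pos j).le (sq_nonneg _)
  set S0 := ∑ j, p j with hS0def
  have hS0 : 0 < S0 := by
    obtain ⟨j0, hj0⟩ := Function.ne_iff.mp hne
    refine Finset.sum_pos' (fun j _ => hp_nn j) ⟨j0, Finset.mem_univ j0, ?_⟩
    rw [hp j0]
    exact mul_pos (hs_pos j0) (pow_two_pos_of_ne_zero (sub_ne_zero.mpr hj0))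
  have hS1_le : ∑ j, p j * lamh j ≤ S0 := by
    rw [hS0def]
    refine Finset.sum_le_sum fun j _ => ?_
    nlinarith [hp_nn j, hl1 j, hl0 j]
  have hS1_nn : 0 ≤ ∑ j, p j * lamh j :=
    Finset.sum_nonneg fun j _ => mul_nonneg (hp_nn j) (hl0 j)
  have hlbar0 : 0 ≤ lbar := hlbar ▸ div_nonneg hS1_nn hS0.le
  have hlbar1 : lbar ≤ 1 := by rw [hlbar]; exact (div_le_one hS0).mpr hS1_le
  have hS1 : ∑ j, p j * lamh j = lbar * S0 := by
    rw [hlbar]; field_simp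
  set M := ⨆ j, lamh j with hM
  set m := ⨅ j, lamh j with hm
  have hMle : ∀ j, lamh j ≤ M := fun j => le_ciSup (Finite.bddAbove_range lamh) j
  have hmle : ∀ j, m ≤ lamh j := fun j => ciInf_le (Finite.bddBelow_range lamh) j
  have hcoord : ∀ (j : Fin d) (x : ℝ),
      (1 - μ) * η1 j * (x - θ1 j) ^ 2 + μ * η2 j * (x - θ2 j) ^ 2
        = ((1 - μ) * η1 j + μ * η2 j) * (x - (θ1 j + lamh j * (θ2 j - θ1 j))) ^ 2
          + (1 - μ) * η1 j * (μ * η2 j) / ((1 - μ) * η1 j + μ * η2 j) * (θ1 j - θ2 j) ^ 2 := by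
    intro j x
    have hs := (hs_pos j).ne'
    rw [hlamh j]
    field_simp
    ring
  have hRμ' : ∀ θ, Rμ θ = ((1 - μ) * c1 + μ * c2)
      - ∑ j, ((1 - μ) * η1 j * (θ j - θ1 j) ^ 2 + μ * η2 j * (θ j - θ2 j) ^ 2) := by
    intro θ
    have e : ∑ j, ((1 - μ) * η1 j * (θ j - θ1 j) ^ 2 + μ * η2 j * (θ j - θ2 j) ^ 2)
        = (1 - μ) * ∑ j, η1 j * (θ j - θ1 j) ^ 2 + μ * ∑ j, η2 j * (θ j - θ2 j) ^ 2 := by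
      rw [Finset.mul_sum, Finset.mul_sum, ← Finset.sum_add_distrib]
      exact Finset.sum_congr rfl fun j _ => by ring
    rw [hRμ θ, hR1 θ, hR2 θ, e]; ring
  set K := ((1 - μ) * c1 + μ * c2)
      - ∑ j, (1 - μ) * η1 j * (μ * η2 j) / ((1 - μ) * η1 j + μ * η2 j) * (θ1 j - θ2 j) ^ 2 with hK
  have hhatK : Rμ θhat ≤ K := by
    rw [hRμ' θhat, hK]
    have h : ∀ j ∈ Finset.univ,
        (1 - μ) * η1 j * (μ * η2 j) / ((1 - μ) * η1 j + μ * η2 j) * (θ1 j - θ2 j) ^ 2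
          ≤ (1 - μ) * η1 j * (θhat j - θ1 j) ^ 2 + μ * η2 j * (θhat j - θ2 j) ^ 2 := by
      intro j _
      rw [hcoord j (θhat j)]
      nlinarith [mul_nonneg (hs_pos j).le (sq_nonneg (θhat j - (θ1 j + lamh j * (θ2 j - θ1 j))))]
    linarith [Finset.sum_le_sum h]
  have hseg : ∀ lam : ℝ, Rμ (fun j => (1 - lam) * θ1 j + lam * θ2 j)
      = K - ∑ j, p j * (lam - lamh j) ^ 2 := by
    intro lam
    rw [hRμ' _, hK]
    have h : ∀ j ∈ Finset.univ,
        (1 - μ) * η1 j * (((1 - lam) * θ1 j + lam * θ2 j) - θ1 j) ^ 2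
          + μ * η2 j * (((1 - lam) * θ1 j + lam * θ2 j) - θ2 j) ^ 2
        = p j * (lam - lamh j) ^ 2
          + (1 - μ) * η1 j * (μ * η2 j) / ((1 - μ) * η1 j + μ * η2 j) * (θ1 j - θ2 j) ^ 2 := by
      intro j _
      rw [hcoord j _, hp j]
      ring
    rw [Finset.sum_congr rfl h, Finset.sum_add_distrib]
    ring
  have hBD : ∑ j, p j * (lbar - lamh j) ^ 2 ≤ (M - lbar) * (lbar - m) * S0 := by
    have e1 : ∑ j, (p j * (lbar - lamh j) ^ 2 + p j * ((M - lamh j) * (lamh j - m)))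
        = ∑ j, (lbar ^ 2 * p j + ((M + m) - 2 * lbar) * (p j * lamh j) - M * m * p j) :=
      Finset.sum_congr rfl fun j _ => by ring
    have e2 : ∑ j, (lbar ^ 2 * p j + ((M + m) - 2 * lbar) * (p j * lamh j) - M * m * p j)
        = lbar ^ 2 * S0 + ((M + m) - 2 * lbar) * (lbar * S0) - M * m * S0 := by
      rw [Finset.sum_sub_distrib, Finset.sum_add_distrib, ← Finset.mul_sum, ← Finset.mul_sum,
        ← Finset.mul_sum, hS1]
    have e0 : ∑ j, (p j * (lbar - lamh j) ^ 2 + p j * ((M - lamh j) * (lamh j - m)))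
        = ∑ j, p j * (lbar - lamh j) ^ 2 + ∑ j, p j * ((M - lamh j) * (lamh j - m)) :=
      Finset.sum_add_distrib
    have e3 : 0 ≤ ∑ j, p j * ((M - lamh j) * (lamh j - m)) :=
      Finset.sum_nonneg fun j _ => mul_nonneg (hp_nn j)
        (mul_nonneg (sub_nonneg.mpr (hMle j)) (sub_nonneg.mpr (hmle j)))
    have e5 : lbar ^ 2 * S0 + ((M + m) - 2 * lbar) * (lbar * S0) - M * m * S0
        = (M - lbar) * (lbar - m) * S0 := by ring
    linarith [e0, e1, e2, e3, e5]
  have hΔ : (1 - μ) * Δ1 + μ * Δ2 = S0 := by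
    have h1 : Δ1 = ∑ j, η1 j * (θ2 j - θ1 j) ^ 2 := by
      rw [hΔ1, hR1 θ1, hR1 θ2]
      simp
    have h2 : Δ2 = ∑ j, η2 j * (θ1 j - θ2 j) ^ 2 := by
      rw [hΔ2, hR2 θ2, hR2 θ1]
      simp
    rw [h1, h2, hS0def, Finset.mul_sum, Finset.mul_sum, ← Finset.sum_add_distrib]
    exact Finset.sum_congr rfl fun j _ => by rw [hp j]; ring
  have hbdd : BddAbove ((fun lam => Rμ (fun j => (1 - lam) * θ1 j + lam * θ2 j)) '' Set.Icc (0 : ℝ) 1) := by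
    refine ⟨Rμ θhat, ?_⟩
    rintro y ⟨lam, _, rfl⟩
    exact hθhat _
  have hmem : Rμ (fun j => (1 - lbar) * θ1 j + lbar * θ2 j)
      ∈ (fun lam => Rμ (fun j => (1 - lam) * θ1 j + lam * θ2 j)) '' Set.Icc (0 : ℝ) 1 :=
    ⟨lbar, ⟨hlbar0, hlbar1⟩, rfl⟩
  have hsup := le_csSup hbdd hmem
  have hsegl := hseg lbar
  rw [hΔ]
  linarith [hhatK, hBD, hsup, hsegl]
end

section
/- Let θ₁, θ₂ ∈ ℝ^d with θ₁ ≠ θ₂, c₁, c₂ ∈ ℝ, and η₁ʲ, η₂ʲ > 0 for j = 1,…,d, and define Rᵢ(θ) = cᵢ − ∑ⱼ ηᵢʲ (θʲ − θᵢʲ)² for i ∈ {1,2}. Fix μ̂ ∈ [0,1], set λ̂ʲ = μ̂η₂ʲ/((1−μ̂)η₁ʲ + μ̂η₂ʲ), pⱼ = ((1−μ̂)η₁ʲ + μ̂η₂ʲ)(θ₁ʲ − θ₂ʲ)², λ̄ = (∑ⱼ pⱼλ̂ʲ)/(∑ⱼ pⱼ), Δ₁ = R₁(θ₁) − R₁(θ₂)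 and Δ₂ = R₂(θ₂) − R₂(θ₁). Then λ̄ = μ̂Δ₂ / ((1−μ̂)Δ₁ + μ̂Δ₂). -/
/-- The optimal interpolation coefficient admits the closed form
`λ̄ = μ̂Δ₂ / ((1-μ̂)Δ₁ + μ̂Δ₂)` where `Δ₁ = R₁(θ₁) - R₁(θ₂)` and `Δ₂ = R₂(θ₂) - R₂(θ₁)`. -/
theorem stmt_12 {d : ℕ} (θ1 θ2 : Fin d → ℝ) (hne : θ1 ≠ θ2) (c1 c2 : ℝ) (η1 η2 : Fin d → ℝ)
    (hη1 : ∀ j, 0 < η1 j) (hη2 : ∀ j, 0 < η2 j)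
    (R1 R2 : (Fin d → ℝ) → ℝ)
    (hR1 : ∀ θ, R1 θ = c1 - ∑ j, η1 j * (θ j - θ1 j) ^ 2)
    (hR2 : ∀ θ, R2 θ = c2 - ∑ j, η2 j * (θ j - θ2 j) ^ 2)
    (μ : ℝ) (hμ : μ ∈ Set.Icc (0 : ℝ) 1)
    (lamh : Fin d → ℝ)
    (hlamh : ∀ j, lamh j = μ * η2 j / ((1 - μ) * η1 j + μ * η2 j))
    (p : Fin d → ℝ)
    (hp : ∀ j, p j = ((1 - μ) * η1 j + μ * η2 j) * (θ1 j - θ2 j) ^ 2)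
    (lbar : ℝ) (hlbar : lbar = (∑ j, p j * lamh j) / ∑ j, p j)
    (Δ1 Δ2 : ℝ) (hΔ1 : Δ1 = R1 θ1 - R1 θ2) (hΔ2 : Δ2 = R2 θ2 - R2 θ1) :
    lbar = μ * Δ2 / ((1 - μ) * Δ1 + μ * Δ2) := by
  obtain ⟨hμ0, hμ1⟩ := hμ
  have hden : ∀ j, 0 < (1 - μ) * η1 j + μ * η2 j := by
    intro j
    rcases lt_or_eq_of_le hμ1 with h | h
    · have : 0 < (1 - μ) * η1 j := mul_pos (by linarith) (hη1 j)
      nlinarith [mul_nonneg hμ0 (hη2 j).le]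
    · have : 0 < μ * η2 j := mul_pos (by linarith) (hη2 j)
      nlinarith [mul_nonneg (by linarith : (0:ℝ) ≤ 1 - μ) (hη1 j).le]
  have hΔ1' : Δ1 = ∑ j, η1 j * (θ1 j - θ2 j) ^ 2 := by
    rw [hΔ1, hR1, hR1]
    have : ∀ j, η1 j * (θ1 j - θ1 j) ^ 2 = 0 := by intro j; ring
    simp only [this]
    rw [Finset.sum_const_zero]
    have : ∀ j, η1 j * (θ2 j - θ1 j) ^ 2 = η1 j * (θ1 j - θ2 j) ^ 2 := by
      intro j; ring
    simp only [this]; ring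
  have hΔ2' : Δ2 = ∑ j, η2 j * (θ1 j - θ2 j) ^ 2 := by
    rw [hΔ2, hR2, hR2]
    have : ∀ j, η2 j * (θ2 j - θ2 j) ^ 2 = 0 := by intro j; ring
    simp only [this]
    rw [Finset.sum_const_zero]; ring
  have hnum : ∀ j, p j * lamh j = μ * (η2 j * (θ1 j - θ2 j) ^ 2) := by
    intro j
    rw [hp, hlamh]
    field_simp [(hden j).ne']
  have hsum : ∑ j, p j = (1 - μ) * Δ1 + μ * Δ2 := by
    rw [hΔ1', hΔ2', Finset.mul_sum, Finset.mul_sum, ← Finset.sum_add_distrib]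
    apply Finset.sum_congr rfl
    intro j _
    rw [hp]; ring
  rw [hlbar, hsum]
  congr 1
  rw [Finset.sum_congr rfl (fun j _ => hnum j), ← Finset.mul_sum, hΔ2']
end

section
/- Let θ₁, θ₂ ∈ ℝ^d with θ₁ ≠ θ₂, c₁, c₂ ∈ ℝ, and η₁ʲ, η₂ʲ > 0 for j = 1,…,d, and define Rᵢ(θ) = cᵢ − ∑ⱼ ηᵢʲ (θʲ − θᵢʲ)² for i ∈ {1,2}. Fix μ̂ ∈ [0,1], R_μ̂ = (1−μ̂)·R₁ + μ̂·R₂, Δ₁ = R₁(θ₁) − R₁(θ₂), Δ₂ = R₂(θ₂) − R₂(θ₁), and M = max_{1≤j≤d} max(η₁ʲ/η₂ʲ, η₂ʲ/η₁ʲ). If Δ₁ = Δ₂, then the rewarded-soups gap ΔR_μ̂ = max_{θ ∈ ℝ^d} R_μ̂(θ) − max_{λ ∈ [0,1]} R_μ̂((1−λ)·θ₁ + λ·θ₂) satisfies ΔR_μ̂ ≤ μ̂²(1−μ̂)²(M−1)² · Δ₁ / (μ̂(1−μ̂)(M−1)² + M). -/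
set_option maxHeartbeats 1000000 in
/-- Simplified bound of Lemma 2 when `Δ₁ = Δ₂`:
`ΔR_μ̂ ≤ μ̂²(1-μ̂)²(M-1)²Δ₁ / (μ̂(1-μ̂)(M-1)² + M)`. -/
theorem stmt_14 {d : ℕ} (θ1 θ2 : Fin d → ℝ) (hne : θ1 ≠ θ2) (c1 c2 : ℝ) (η1 η2 : Fin d → ℝ)
    (hη1 : ∀ j, 0 < η1 j) (hη2 : ∀ j, 0 < η2 j)
    (R1 R2 : (Fin d → ℝ) → ℝ)
    (hR1 : ∀ θ, R1 θ = c1 - ∑ j, η1 j * (θ j - θ1 j) ^ 2)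
    (hR2 : ∀ θ, R2 θ = c2 - ∑ j, η2 j * (θ j - θ2 j) ^ 2)
    (μ : ℝ) (hμ : μ ∈ Set.Icc (0 : ℝ) 1)
    (Rμ : (Fin d → ℝ) → ℝ) (hRμ : ∀ θ, Rμ θ = (1 - μ) * R1 θ + μ * R2 θ)
    (Δ1 Δ2 : ℝ) (hΔ1 : Δ1 = R1 θ1 - R1 θ2) (hΔ2 : Δ2 = R2 θ2 - R2 θ1)
    (M : ℝ) (hM : M = ⨆ j, max (η1 j / η2 j) (η2 j / η1 j))
    (hΔeq : Δ1 = Δ2) :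
    (⨆ θ : Fin d → ℝ, Rμ θ)
        - sSup ((fun lam => Rμ (fun j => (1 - lam) * θ1 j + lam * θ2 j)) '' Set.Icc (0 : ℝ) 1)
      ≤ μ ^ 2 * (1 - μ) ^ 2 * (M - 1) ^ 2 * Δ1 / (μ * (1 - μ) * (M - 1) ^ 2 + M) := by
  obtain ⟨hμ0, hμ1⟩ := hμ
  have hμ0' : (0:ℝ) ≤ 1 - μ := by linarith
  obtain ⟨j0, hj0⟩ := Function.ne_iff.mp hne
  have ha : ∀ j, 0 < (1 - μ) * η1 j + μ * η2 j := by
    intro j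
    have h1 := hη1 j; have h2 := hη2 j
    have hmin : min (η1 j) (η2 j) ≤ (1 - μ) * η1 j + μ * η2 j := by
      nlinarith [min_le_left (η1 j) (η2 j), min_le_right (η1 j) (η2 j)]
    exact lt_of_lt_of_le (lt_min h1 h2) hmin
  -- M facts
  have hbdd : BddAbove (Set.range fun j => max (η1 j / η2 j) (η2 j / η1 j)) :=
    Set.Finite.bddAbove (Set.finite_range _)
  have hMge : ∀ j, max (η1 j / η2 j) (η2 j / η1 j) ≤ M := by
    intro j; rw [hM]; exact le_ciSup hbdd j
  have h1M : ∀ j, η1 j ≤ M * η2 j := by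
    intro j
    have := le_trans (le_max_left (η1 j / η2 j) (η2 j / η1 j)) (hMge j)
    rwa [div_le_iff₀ (hη2 j)] at this
  have h2M : ∀ j, η2 j ≤ M * η1 j := by
    intro j
    have := le_trans (le_max_right (η1 j / η2 j) (η2 j / η1 j)) (hMge j)
    rwa [div_le_iff₀ (hη1 j)] at this
  have hM1 : (1:ℝ) ≤ M := by
    rcases le_total (η1 j0) (η2 j0) with h | h
    · have : (1:ℝ) ≤ η2 j0 / η1 j0 := (one_le_div (hη1 j0)).mpr h
      exact le_trans (le_trans this (le_max_right _ _)) (hMge j0)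
    · have : (1:ℝ) ≤ η1 j0 / η2 j0 := (one_le_div (hη2 j0)).mpr h
      exact le_trans (le_trans this (le_max_left _ _)) (hMge j0)
  have hD : 0 < μ * (1 - μ) * (M - 1) ^ 2 + M := by
    nlinarith [mul_nonneg (mul_nonneg hμ0 hμ0') (sq_nonneg (M - 1))]
  -- Δ values
  have hA : Δ1 = ∑ j, η1 j * (θ2 j - θ1 j) ^ 2 := by
    rw [hΔ1, hR1, hR1]; simp
  have hB : Δ2 = ∑ j, η2 j * (θ2 j - θ1 j) ^ 2 := by
    rw [hΔ2, hR2, hR2,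
      show (∑ j, η2 j * (θ1 j - θ2 j) ^ 2) = ∑ j, η2 j * (θ2 j - θ1 j) ^ 2 from
        Finset.sum_congr rfl fun j _ => by ring]
    simp
  -- pointwise upper bound V
  set V : ℝ := (1 - μ) * c1 + μ * c2
      - ∑ j, μ * (1 - μ) * (η1 j * η2 j) / ((1 - μ) * η1 j + μ * η2 j) * (θ2 j - θ1 j) ^ 2
    with hV
  have hpt : ∀ θ : Fin d → ℝ, Rμ θ ≤ V := by
    intro θ
    rw [hRμ, hR1, hR2, hV]
    have key : ∀ j ∈ Finset.univ,
        μ * (1 - μ) * (η1 j * η2 j) / ((1 - μ) * η1 j + μ * η2 j) * (θ2 j - θ1 j) ^ 2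
          ≤ (1 - μ) * (η1 j * (θ j - θ1 j) ^ 2) + μ * (η2 j * (θ j - θ2 j) ^ 2) := by
      intro j _
      rw [div_mul_eq_mul_div, div_le_iff₀ (ha j)]
      nlinarith [sq_nonneg ((1 - μ) * η1 j * (θ j - θ1 j) + μ * η2 j * (θ j - θ2 j)),
        mul_nonneg hμ0' (hη1 j).le, mul_nonneg hμ0 (hη2 j).le]
    have hsum := Finset.sum_le_sum key
    have hsplit : ∑ j, ((1 - μ) * (η1 j * (θ j - θ1 j) ^ 2) + μ * (η2 j * (θ j - θ2 j) ^ 2))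
        = (1 - μ) * ∑ j, η1 j * (θ j - θ1 j) ^ 2 + μ * ∑ j, η2 j * (θ j - θ2 j) ^ 2 := by
      rw [Finset.sum_add_distrib, ← Finset.mul_sum, ← Finset.mul_sum]
    linarith [hsum, hsplit.symm.le, hsplit.le]
  have hsup : (⨆ θ : Fin d → ℝ, Rμ θ) ≤ V := ciSup_le hpt
  -- value at λ = μ
  have hW : Rμ (fun j => (1 - μ) * θ1 j + μ * θ2 j)
      = (1 - μ) * c1 + μ * c2
        - ∑ j, ((1 - μ) * η1 j * μ ^ 2 + μ * η2 j * (1 - μ) ^ 2) * (θ2 j - θ1 j) ^ 2 := by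
    rw [hRμ, hR1, hR2,
      show (∑ j, η1 j * ((1 - μ) * θ1 j + μ * θ2 j - θ1 j) ^ 2)
          = ∑ j, η1 j * μ ^ 2 * (θ2 j - θ1 j) ^ 2 from
        Finset.sum_congr rfl fun j _ => by ring,
      show (∑ j, η2 j * ((1 - μ) * θ1 j + μ * θ2 j - θ2 j) ^ 2)
          = ∑ j, η2 j * (1 - μ) ^ 2 * (θ2 j - θ1 j) ^ 2 from
        Finset.sum_congr rfl fun j _ => by ring]
    have hc : ∑ j, ((1 - μ) * η1 j * μ ^ 2 + μ * η2 j * (1 - μ) ^ 2) * (θ2 j - θ1 j) ^ 2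
        = (1 - μ) * ∑ j, η1 j * μ ^ 2 * (θ2 j - θ1 j) ^ 2
          + μ * ∑ j, η2 j * (1 - μ) ^ 2 * (θ2 j - θ1 j) ^ 2 := by
      rw [Finset.mul_sum, Finset.mul_sum, ← Finset.sum_add_distrib]
      exact Finset.sum_congr rfl fun j _ => by ring
    rw [hc]; ring
  have hlow : Rμ (fun j => (1 - μ) * θ1 j + μ * θ2 j)
      ≤ sSup ((fun lam => Rμ fun j => (1 - lam) * θ1 j + lam * θ2 j) '' Set.Icc (0:ℝ) 1) := by
    apply le_csSup
    · exact ⟨V, by rintro x ⟨lam, _, rfl⟩; exact hpt _⟩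
    · exact ⟨μ, ⟨hμ0, hμ1⟩, rfl⟩
  -- assemble
  have hΔsum : ∑ j, (μ * η1 j + (1 - μ) * η2 j) * (θ2 j - θ1 j) ^ 2 = Δ1 := by
    have : ∑ j, (μ * η1 j + (1 - μ) * η2 j) * (θ2 j - θ1 j) ^ 2
        = μ * ∑ j, η1 j * (θ2 j - θ1 j) ^ 2 + (1 - μ) * ∑ j, η2 j * (θ2 j - θ1 j) ^ 2 := by
      rw [Finset.mul_sum, Finset.mul_sum, ← Finset.sum_add_distrib]
      exact Finset.sum_congr rfl fun j _ => by ring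
    rw [this, ← hA, ← hB, ← hΔeq]; ring
  have main : V - Rμ (fun j => (1 - μ) * θ1 j + μ * θ2 j)
      ≤ μ ^ 2 * (1 - μ) ^ 2 * (M - 1) ^ 2 * Δ1 / (μ * (1 - μ) * (M - 1) ^ 2 + M) := by
    rw [hW, hV]
    have step : ∀ j ∈ Finset.univ,
        ((1 - μ) * η1 j * μ ^ 2 + μ * η2 j * (1 - μ) ^ 2) * (θ2 j - θ1 j) ^ 2
          - μ * (1 - μ) * (η1 j * η2 j) / ((1 - μ) * η1 j + μ * η2 j) * (θ2 j - θ1 j) ^ 2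
        ≤ μ ^ 2 * (1 - μ) ^ 2 * (M - 1) ^ 2 / (μ * (1 - μ) * (M - 1) ^ 2 + M)
            * ((μ * η1 j + (1 - μ) * η2 j) * (θ2 j - θ1 j) ^ 2) := by
      intro j _
      have hterm : ((1 - μ) * η1 j * μ ^ 2 + μ * η2 j * (1 - μ) ^ 2) * (θ2 j - θ1 j) ^ 2
          - μ * (1 - μ) * (η1 j * η2 j) / ((1 - μ) * η1 j + μ * η2 j) * (θ2 j - θ1 j) ^ 2
          = μ ^ 2 * (1 - μ) ^ 2 * ((η1 j - η2 j) ^ 2 / ((1 - μ) * η1 j + μ * η2 j))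
              * (θ2 j - θ1 j) ^ 2 := by
        have hne' := (ha j).ne'
        field_simp
        ring
      rw [hterm]
      have core : (η1 j - η2 j) ^ 2 / ((1 - μ) * η1 j + μ * η2 j)
          ≤ (M - 1) ^ 2 * (μ * η1 j + (1 - μ) * η2 j) / (μ * (1 - μ) * (M - 1) ^ 2 + M) := by
        rw [div_le_div_iff₀ (ha j) hD]
        nlinarith [mul_nonneg (sub_nonneg.mpr (h1M j)) (sub_nonneg.mpr (h2M j))]
      have hmul := mul_le_mul_of_nonneg_left core
        (show (0:ℝ) ≤ μ ^ 2 * (1 - μ) ^ 2 * (θ2 j - θ1 j) ^ 2 by positivity)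
      calc μ ^ 2 * (1 - μ) ^ 2 * ((η1 j - η2 j) ^ 2 / ((1 - μ) * η1 j + μ * η2 j))
            * (θ2 j - θ1 j) ^ 2
          = μ ^ 2 * (1 - μ) ^ 2 * (θ2 j - θ1 j) ^ 2
              * ((η1 j - η2 j) ^ 2 / ((1 - μ) * η1 j + μ * η2 j)) := by ring
        _ ≤ μ ^ 2 * (1 - μ) ^ 2 * (θ2 j - θ1 j) ^ 2
              * ((M - 1) ^ 2 * (μ * η1 j + (1 - μ) * η2 j)
                / (μ * (1 - μ) * (M - 1) ^ 2 + M)) := hmul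
        _ = μ ^ 2 * (1 - μ) ^ 2 * (M - 1) ^ 2 / (μ * (1 - μ) * (M - 1) ^ 2 + M)
              * ((μ * η1 j + (1 - μ) * η2 j) * (θ2 j - θ1 j) ^ 2) := by ring
    have hsum := Finset.sum_le_sum step
    rw [Finset.sum_sub_distrib, ← Finset.mul_sum, hΔsum] at hsum
    calc (1 - μ) * c1 + μ * c2
          - (∑ j, μ * (1 - μ) * (η1 j * η2 j) / ((1 - μ) * η1 j + μ * η2 j)
              * (θ2 j - θ1 j) ^ 2)
          - ((1 - μ) * c1 + μ * c2
            - ∑ j, ((1 - μ) * η1 j * μ ^ 2 + μ * η2 j * (1 - μ) ^ 2) * (θ2 j - θ1 j) ^ 2)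
        = (∑ j, ((1 - μ) * η1 j * μ ^ 2 + μ * η2 j * (1 - μ) ^ 2) * (θ2 j - θ1 j) ^ 2)
          - ∑ j, μ * (1 - μ) * (η1 j * η2 j) / ((1 - μ) * η1 j + μ * η2 j)
              * (θ2 j - θ1 j) ^ 2 := by ring
      _ ≤ μ ^ 2 * (1 - μ) ^ 2 * (M - 1) ^ 2 / (μ * (1 - μ) * (M - 1) ^ 2 + M) * Δ1 := hsum
      _ = μ ^ 2 * (1 - μ) ^ 2 * (M - 1) ^ 2 * Δ1 / (μ * (1 - μ) * (M - 1) ^ 2 + M) := by ring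
  exact le_trans (sub_le_sub hsup hlow) main
end

section
/- (Rewarded soups is optimal for equal Hessians.) Let θ₁, θ₂ ∈ ℝ^d, c₁, c₂ ∈ ℝ, and ηʲ > 0 for j = 1,…,d, and define Rᵢ(θ) = cᵢ − ∑ⱼ ηʲ (θʲ − θᵢʲ)² for i ∈ {1,2} (i.e., the two quadratic rewards have the same diagonal Hessian, so M = 1). Then for every μ̂ ∈ [0,1], with R_μ̂ = (1−μ̂)·R₁ + μ̂·R₂, the global maximum of R_μ̂ over ℝ^d is attained on the segment {(1−λ)·θ₁ + λ·θ₂ : λ ∈ [0,1]}; in particular ΔR_μ̂ = max_{θ ∈ ℝ^d} R_μ̂(θ) − max_{λ ∈ [0,1]} R_μ̂((1−λ)·θ₁ + λ·θ₂) = 0. -/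
/-- Rewarded soups is optimal for equal Hessians: if the two quadratic rewards share the
same diagonal Hessian coefficients `ηʲ > 0`, then for every `μ̂ ∈ [0,1]` the global
maximum of `R_μ̂` over `ℝ^d` is attained on the segment `{(1-λ)θ₁ + λθ₂ : λ ∈ [0,1]}`;
in particular the rewarded-soups gap `ΔR_μ̂` is zero. -/
theorem stmt_15 {d : ℕ} (θ1 θ2 : Fin d → ℝ) (c1 c2 : ℝ) (η : Fin d → ℝ)
    (hη : ∀ j, 0 < η j)
    (R1 R2 : (Fin d → ℝ) → ℝ)
    (hR1 : ∀ θ, R1 θ = c1 - ∑ j, η j * (θ j - θ1 j) ^ 2)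
    (hR2 : ∀ θ, R2 θ = c2 - ∑ j, η j * (θ j - θ2 j) ^ 2)
    (μ : ℝ) (hμ : μ ∈ Set.Icc (0 : ℝ) 1)
    (Rμ : (Fin d → ℝ) → ℝ) (hRμ : ∀ θ, Rμ θ = (1 - μ) * R1 θ + μ * R2 θ) :
    (∃ lam ∈ Set.Icc (0 : ℝ) 1,
        ∀ θ, Rμ θ ≤ Rμ (fun j => (1 - lam) * θ1 j + lam * θ2 j)) ∧
      (⨆ θ : Fin d → ℝ, Rμ θ)
          - sSup ((fun lam => Rμ (fun j => (1 - lam) * θ1 j + lam * θ2 j)) '' Set.Icc (0 : ℝ) 1)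
        = 0 := by
  obtain ⟨hμ0, hμ1⟩ := hμ
  set θs : Fin d → ℝ := fun j => (1 - μ) * θ1 j + μ * θ2 j with hθs
  have expand : ∀ x : Fin d → ℝ, Rμ x =
      (1 - μ) * c1 + μ * c2 -
        ∑ j, ((1 - μ) * (η j * (x j - θ1 j) ^ 2) + μ * (η j * (x j - θ2 j) ^ 2)) := by
    intro x
    rw [hRμ, hR1, hR2, Finset.sum_add_distrib, ← Finset.mul_sum, ← Finset.mul_sum]
    ring
  have key : ∀ θ, Rμ θ ≤ Rμ θs := by
    intro θ
    rw [expand, expand]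
    have hsum : ∑ j, ((1 - μ) * (η j * (θs j - θ1 j) ^ 2) + μ * (η j * (θs j - θ2 j) ^ 2))
        ≤ ∑ j, ((1 - μ) * (η j * (θ j - θ1 j) ^ 2) + μ * (η j * (θ j - θ2 j) ^ 2)) := by
      refine Finset.sum_le_sum fun j _ => ?_
      have h1 := mul_nonneg (hη j).le (sq_nonneg (θ j - ((1 - μ) * θ1 j + μ * θ2 j)))
      have h2 := mul_nonneg (mul_nonneg hμ0 (by linarith : (0:ℝ) ≤ 1 - μ))
        (mul_nonneg (hη j).le (sq_nonneg (θ1 j - θ2 j)))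
      simp only [hθs]
      nlinarith [h1, h2]
    linarith
  have hmemθs : Rμ θs ∈
      (fun lam => Rμ fun j => (1 - lam) * θ1 j + lam * θ2 j) '' Set.Icc (0 : ℝ) 1 :=
    ⟨μ, ⟨hμ0, hμ1⟩, rfl⟩
  refine ⟨⟨μ, ⟨hμ0, hμ1⟩, key⟩, ?_⟩
  have hbdd : BddAbove (Set.range Rμ) := ⟨Rμ θs, by rintro x ⟨θ, rfl⟩; exact key θ⟩
  have h1 : (⨆ θ : Fin d → ℝ, Rμ θ) = Rμ θs :=
    le_antisymm (ciSup_le key) (le_ciSup hbdd θs)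
  have h2 : sSup ((fun lam => Rμ fun j => (1 - lam) * θ1 j + lam * θ2 j) '' Set.Icc (0 : ℝ) 1)
      = Rμ θs := by
    refine le_antisymm (csSup_le ⟨_, hmemθs⟩ ?_) (le_csSup ?_ hmemθs)
    · rintro x ⟨lam, _, rfl⟩; exact key _
    · exact ⟨Rμ θs, by rintro x ⟨lam, _, rfl⟩; exact key _⟩
  rw [h1, h2, sub_self]
end

section
/- Let θ₁, θ₂ ∈ ℝ^d with θ₁ ≠ θ₂, c₁, c₂ ∈ ℝ, and η₁ʲ, η₂ʲ > 0 for j = 1,…,d, and define Rᵢ(θ) = cᵢ − ∑ⱼ ηᵢʲ (θʲ − θᵢʲ)² for i ∈ {1,2}. Fix μ̂ ∈ [0,1], set λ̂ʲ = μ̂η₂ʲ/((1−μ̂)η₁ʲ + μ̂η₂ʲ), pⱼ = ((1−μ̂)η₁ʲ + μ̂η₂ʲ)(θ₁ʲ − θ₂ʲ)², λ̄ = (∑ⱼ pⱼλ̂ʲ)/(∑ⱼ pⱼ), Δ₁ = R₁(θ₁) − R₁(θ₂), Δ₂ = R₂(θ₂) − R₂(θ₁), and M = max_{1≤j≤d}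 max(η₁ʲ/η₂ʲ, η₂ʲ/η₁ʲ). Then the rewarded-soups gap ΔR_μ̂ = max_{θ ∈ ℝ^d} R_μ̂(θ) − max_{λ ∈ [0,1]} R_μ̂((1−λ)·θ₁ + λ·θ₂) satisfies ΔR_μ̂ ≤ ( μ̂M/(1 + μ̂(M−1)) − λ̄ ) · ( λ̄ − μ̂/(M − μ̂(M−1)) ) · ((1−μ̂)Δ₁ + μ̂Δ₂). -/
open Finset

private lemma stmt16_aux1 (μ a b e1 e2 x : ℝ) (h : (1-μ)*e1 + μ*e2 ≠ 0) :
    (1-μ)*(e1*(x-a)^2) + μ*(e2*(x-b)^2)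
      = (1-μ)*e1*(μ*e2)/((1-μ)*e1+μ*e2)*(a-b)^2
        + ((1-μ)*e1+μ*e2)*(x - ((1-μ)*e1*a+μ*e2*b)/((1-μ)*e1+μ*e2))^2 := by
  field_simp
  ring

private lemma stmt16_aux2 (μ a b e1 e2 lam : ℝ) (h : (1-μ)*e1 + μ*e2 ≠ 0) :
    ((1-μ)*e1+μ*e2) * (((1-lam)*a+lam*b) - ((1-μ)*e1*a+μ*e2*b)/((1-μ)*e1+μ*e2))^2
      = (((1-μ)*e1+μ*e2)*(a-b)^2) * (lam - μ*e2/((1-μ)*e1+μ*e2))^2 := by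
  field_simp
  ring

/-- Intermediate bound on the rewarded-soups gap:
`ΔR_μ̂ ≤ (μ̂M/(1 + μ̂(M-1)) - λ̄)(λ̄ - μ̂/(M - μ̂(M-1)))((1-μ̂)Δ₁ + μ̂Δ₂)`. -/
theorem stmt_16 {d : ℕ} (θ1 θ2 : Fin d → ℝ) (hne : θ1 ≠ θ2) (c1 c2 : ℝ) (η1 η2 : Fin d → ℝ)
    (hη1 : ∀ j, 0 < η1 j) (hη2 : ∀ j, 0 < η2 j)
    (R1 R2 : (Fin d → ℝ) → ℝ)
    (hR1 : ∀ θ, R1 θ = c1 - ∑ j, η1 j * (θ j - θ1 j) ^ 2)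
    (hR2 : ∀ θ, R2 θ = c2 - ∑ j, η2 j * (θ j - θ2 j) ^ 2)
    (μ : ℝ) (hμ : μ ∈ Set.Icc (0 : ℝ) 1)
    (Rμ : (Fin d → ℝ) → ℝ) (hRμ : ∀ θ, Rμ θ = (1 - μ) * R1 θ + μ * R2 θ)
    (lamh : Fin d → ℝ)
    (hlamh : ∀ j, lamh j = μ * η2 j / ((1 - μ) * η1 j + μ * η2 j))
    (p : Fin d → ℝ)
    (hp : ∀ j, p j = ((1 - μ) * η1 j + μ * η2 j) * (θ1 j - θ2 j) ^ 2)
    (lbar : ℝ) (hlbar : lbar = (∑ j, p j * lamh j) / ∑ j, p j)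
    (Δ1 Δ2 : ℝ) (hΔ1 : Δ1 = R1 θ1 - R1 θ2) (hΔ2 : Δ2 = R2 θ2 - R2 θ1)
    (M : ℝ) (hM : M = ⨆ j, max (η1 j / η2 j) (η2 j / η1 j)) :
    (⨆ θ : Fin d → ℝ, Rμ θ)
        - sSup ((fun lam => Rμ (fun j => (1 - lam) * θ1 j + lam * θ2 j)) '' Set.Icc (0 : ℝ) 1)
      ≤ (μ * M / (1 + μ * (M - 1)) - lbar) * (lbar - μ / (M - μ * (M - 1)))
          * ((1 - μ) * Δ1 + μ * Δ2) := by
  obtain ⟨j0, hj0⟩ := Function.ne_iff.mp hne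
  have hdne : Nonempty (Fin d) := ⟨j0⟩
  obtain ⟨hμ0, hμ1⟩ := hμ
  have hημ : ∀ j, 0 < (1 - μ) * η1 j + μ * η2 j := by
    intro j
    rcases eq_or_lt_of_le hμ0 with h | h
    · subst h; linarith [hη1 j]
    · have h1 : 0 < μ * η2 j := mul_pos h (hη2 j)
      have h2 : 0 ≤ (1 - μ) * η1 j := mul_nonneg (by linarith) (hη1 j).le
      linarith
  have hημ' : ∀ j, ((1 - μ) * η1 j + μ * η2 j) ≠ 0 := fun j => (hημ j).ne'
  -- M facts
  have hMb : ∀ j, max (η1 j / η2 j) (η2 j / η1 j) ≤ M := by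
    intro j; rw [hM]
    exact le_ciSup (f := fun j => max (η1 j / η2 j) (η2 j / η1 j))
      (Set.Finite.bddAbove (Set.finite_range _)) j
  have hMa : ∀ j, η1 j ≤ M * η2 j := fun j =>
    (div_le_iff₀ (hη2 j)).mp (max_le_iff.mp (hMb j)).1
  have hMc : ∀ j, η2 j ≤ M * η1 j := fun j =>
    (div_le_iff₀ (hη1 j)).mp (max_le_iff.mp (hMb j)).2
  have hMpos : 0 < M := by nlinarith [hMa j0, hη1 j0, hη2 j0]
  have hM1 : 1 ≤ M := by nlinarith [hMa j0, hMc j0, hη1 j0, hη2 j0]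
  have hD1 : (0:ℝ) < 1 + μ * (M - 1) := by nlinarith
  have hD2 : (0:ℝ) < M - μ * (M - 1) := by nlinarith
  set lp : ℝ := μ * M / (1 + μ * (M - 1)) with hlp
  set lm : ℝ := μ / (M - μ * (M - 1)) with hlm
  -- lamh bounds
  have hlam0 : ∀ j, 0 ≤ lamh j := by
    intro j; rw [hlamh j]
    exact div_nonneg (mul_nonneg hμ0 (hη2 j).le) (hημ j).le
  have hlam1 : ∀ j, lamh j ≤ 1 := by
    intro j; rw [hlamh j, div_le_one (hημ j)]
    nlinarith [hη1 j]
  have hlamlo : ∀ j, lm ≤ lamh j := by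
    intro j; rw [hlamh j, hlm, div_le_div_iff₀ hD2 (hημ j)]
    nlinarith [mul_nonneg (mul_nonneg hμ0 (by linarith : (0:ℝ) ≤ 1 - μ))
      (sub_nonneg.mpr (hMa j))]
  have hlamhi : ∀ j, lamh j ≤ lp := by
    intro j; rw [hlamh j, hlp, div_le_div_iff₀ (hημ j) hD1]
    nlinarith [mul_nonneg (mul_nonneg hμ0 (by linarith : (0:ℝ) ≤ 1 - μ))
      (sub_nonneg.mpr (hMc j))]
  -- p facts
  have hp0 : ∀ j, 0 ≤ p j := by
    intro j; rw [hp j]; exact mul_nonneg (hημ j).le (sq_nonneg _)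
  have hpj0 : 0 < p j0 := by
    rw [hp j0]
    have h2 : θ1 j0 - θ2 j0 ≠ 0 := sub_ne_zero.mpr hj0
    have := hημ j0
    positivity
  set S : ℝ := ∑ j, p j with hSdef
  have hS : 0 < S := Finset.sum_pos' (fun j _ => hp0 j) ⟨j0, mem_univ _, hpj0⟩
  have hlbarS : ∑ j, p j * lamh j = lbar * S := by
    rw [hlbar]; field_simp
  -- lbar bounds
  have hlbarlo : lm ≤ lbar := by
    have h1 : lm * S ≤ lbar * S := by
      rw [← hlbarS]
      calc lm * S = ∑ j, p j * lm := by
            rw [hSdef, Finset.mul_sum]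
            exact Finset.sum_congr rfl fun j _ => by ring
        _ ≤ ∑ j, p j * lamh j :=
            Finset.sum_le_sum fun j _ => mul_le_mul_of_nonneg_left (hlamlo j) (hp0 j)
    exact le_of_mul_le_mul_right h1 hS
  have hlbarhi : lbar ≤ lp := by
    have h1 : lbar * S ≤ lp * S := by
      rw [← hlbarS]
      calc ∑ j, p j * lamh j
          ≤ ∑ j, p j * lp :=
            Finset.sum_le_sum fun j _ => mul_le_mul_of_nonneg_left (hlamhi j) (hp0 j)
        _ = lp * S := by
            rw [hSdef, Finset.mul_sum]
            exact Finset.sum_congr rfl fun j _ => by ring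
    exact le_of_mul_le_mul_right h1 hS
  have hlbar0 : 0 ≤ lbar := by
    have : 0 ≤ lm := div_nonneg hμ0 hD2.le
    linarith
  have hlbar1 : lbar ≤ 1 := by
    have : lp ≤ 1 := by rw [hlp, div_le_one hD1]; nlinarith
    linarith
  -- variance bound
  have hvar : ∑ j, p j * (lbar - lamh j) ^ 2 ≤ (lp - lbar) * (lbar - lm) * S := by
    have hnn : 0 ≤ ∑ j, p j * ((lp - lamh j) * (lamh j - lm)) :=
      Finset.sum_nonneg fun j _ => mul_nonneg (hp0 j)
        (mul_nonneg (sub_nonneg.2 (hlamhi j)) (sub_nonneg.2 (hlamlo j)))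
    have e1 : ∑ j, p j * (lbar - lamh j) ^ 2
        = (∑ j, p j * lamh j ^ 2) - 2 * lbar * (∑ j, p j * lamh j) + lbar ^ 2 * S := by
      rw [hSdef, Finset.mul_sum, Finset.mul_sum, ← Finset.sum_sub_distrib,
        ← Finset.sum_add_distrib]
      exact Finset.sum_congr rfl fun j _ => by ring
    have e2 : ∑ j, p j * ((lp - lamh j) * (lamh j - lm))
        = (lp + lm) * (∑ j, p j * lamh j) - lp * lm * S - ∑ j, p j * lamh j ^ 2 := by
      rw [hSdef, Finset.mul_sum, Finset.mul_sum, ← Finset.sum_sub_distrib,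
        ← Finset.sum_sub_distrib]
      exact Finset.sum_congr rfl fun j _ => by ring
    rw [e1, hlbarS]
    rw [e2, hlbarS] at hnn
    nlinarith [hnn]
  -- Rμ in completed-square form
  set K : ℝ := (1 - μ) * c1 + μ * c2 with hK
  set Q : ℝ := ∑ j, (1 - μ) * η1 j * (μ * η2 j) / ((1 - μ) * η1 j + μ * η2 j)
      * (θ1 j - θ2 j) ^ 2 with hQ
  have hRμ' : ∀ θ, Rμ θ = K - Q
      - ∑ j, ((1 - μ) * η1 j + μ * η2 j)
          * (θ j - ((1 - μ) * η1 j * θ1 j + μ * η2 j * θ2 j)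
              / ((1 - μ) * η1 j + μ * η2 j)) ^ 2 := by
    intro θ
    rw [hRμ, hR1, hR2]
    have expand : (1 - μ) * (c1 - ∑ j, η1 j * (θ j - θ1 j) ^ 2)
        + μ * (c2 - ∑ j, η2 j * (θ j - θ2 j) ^ 2)
        = K - ∑ j, ((1 - μ) * (η1 j * (θ j - θ1 j) ^ 2)
            + μ * (η2 j * (θ j - θ2 j) ^ 2)) := by
      rw [Finset.sum_add_distrib, ← Finset.mul_sum, ← Finset.mul_sum, hK]; ring
    rw [expand, hQ, sub_sub, ← Finset.sum_add_distrib]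
    rw [Finset.sum_congr rfl fun j _ =>
      stmt16_aux1 μ (θ1 j) (θ2 j) (η1 j) (η2 j) (θ j) (hημ' j)]
  -- on the segment
  have hseg : ∀ lam : ℝ, Rμ (fun j => (1 - lam) * θ1 j + lam * θ2 j)
      = K - Q - ∑ j, p j * (lam - lamh j) ^ 2 := by
    intro lam
    rw [hRμ']
    congr 1
    refine Finset.sum_congr rfl fun j _ => ?_
    rw [hp j, hlamh j]
    exact stmt16_aux2 μ (θ1 j) (θ2 j) (η1 j) (η2 j) lam (hημ' j)
  -- sup bound
  have hsup : (⨆ θ : Fin d → ℝ, Rμ θ) ≤ K - Q := by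
    apply ciSup_le
    intro θ
    rw [hRμ' θ]
    have : (0:ℝ) ≤ ∑ j, ((1 - μ) * η1 j + μ * η2 j)
        * (θ j - ((1 - μ) * η1 j * θ1 j + μ * η2 j * θ2 j)
            / ((1 - μ) * η1 j + μ * η2 j)) ^ 2 :=
      Finset.sum_nonneg fun j _ => mul_nonneg (hημ j).le (sq_nonneg _)
    linarith
  -- sSup lower bound
  have hssup : K - Q - ∑ j, p j * (lbar - lamh j) ^ 2
      ≤ sSup ((fun lam => Rμ (fun j => (1 - lam) * θ1 j + lam * θ2 j)) '' Set.Icc (0:ℝ) 1) := by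
    apply le_csSup
    · refine ⟨K - Q, ?_⟩
      rintro x ⟨lam, _, rfl⟩
      show Rμ (fun j => (1 - lam) * θ1 j + lam * θ2 j) ≤ K - Q
      rw [hseg lam]
      have : (0:ℝ) ≤ ∑ j, p j * (lam - lamh j) ^ 2 :=
        Finset.sum_nonneg fun j _ => mul_nonneg (hp0 j) (sq_nonneg _)
      linarith
    · refine ⟨lbar, ⟨hlbar0, hlbar1⟩, ?_⟩
      show Rμ (fun j => (1 - lbar) * θ1 j + lbar * θ2 j)
        = K - Q - ∑ j, p j * (lbar - lamh j) ^ 2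
      exact hseg lbar
  -- Δ sum
  have hΔsum : (1 - μ) * Δ1 + μ * Δ2 = S := by
    have h1 : Δ1 = ∑ j, η1 j * (θ2 j - θ1 j) ^ 2 := by
      rw [hΔ1, hR1, hR1]; simp
    have h2 : Δ2 = ∑ j, η2 j * (θ1 j - θ2 j) ^ 2 := by
      rw [hΔ2, hR2, hR2]; simp
    rw [h1, h2, hSdef, Finset.mul_sum, Finset.mul_sum, ← Finset.sum_add_distrib]
    exact Finset.sum_congr rfl fun j _ => by rw [hp j]; ring
  calc (⨆ θ : Fin d → ℝ, Rμ θ)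
        - sSup ((fun lam => Rμ (fun j => (1 - lam) * θ1 j + lam * θ2 j)) '' Set.Icc (0:ℝ) 1)
      ≤ (K - Q) - (K - Q - ∑ j, p j * (lbar - lamh j) ^ 2) := sub_le_sub hsup hssup
    _ = ∑ j, p j * (lbar - lamh j) ^ 2 := by ring
    _ ≤ (lp - lbar) * (lbar - lm) * S := hvar
    _ = (μ * M / (1 + μ * (M - 1)) - lbar) * (lbar - μ / (M - μ * (M - 1)))
          * ((1 - μ) * Δ1 + μ * Δ2) := by rw [hΔsum, hlp, hlm]
end
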